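/- arXiv:2108.07383 — 2 statements merged into one kernel-verified Lean document; each statement's English description precedes it below -/
import Mathlib

section
/- (Lemma of Inaba, Katoh and Imai, Lemma 2.1 of the paper.) Let X be a finite nonempty set of points in ℝ^d, and let x₁, …, x_M be independent random points each uniformly distributed on X, with sample mean μ(S) = (1/M) Σ_{i=1}^M x_i. Then for every δ > 0, with probability at least 1 − δ it holds that Φ(X, μ(S)) ≤ (1 + 1/(δM)) · Φ(X, μ(X)). -/
/-!
By the bias–variance identity `Φ(X, c) = Φ(X, μ(X)) + |X| ‖c - μ(X)‖²`, the excess cost of the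
sample mean is `|X|` times its squared distance to `μ(X)`. That distance is `1/M` times a sum of `M`
independent centred samples, whose cross terms average to zero, so the expected excess cost is
`Φ(X, μ(X)) / M`. Markov's inequality bounds the probability that it exceeds `Φ(X, μ(X)) / (δM)`
by `δ`.
-/

open Finset

/-- The centroid of a finite point set. -/
noncomputable def centroid {d : ℕ} (X : Finset (EuclideanSpace ℝ (Fin d))) :
    EuclideanSpace ℝ (Fin d) :=
  (X.card : ℝ)⁻¹ • ∑ x ∈ X, x

/-- The cost of covering `X` with a single center `c`. -/
noncomputable def costPt {d : ℕ} (X : Finset (EuclideanSpace ℝ (Fin d)))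
    (c : EuclideanSpace ℝ (Fin d)) : ℝ :=
  ∑ x ∈ X, ‖x - c‖ ^ 2

theorem Finset.card_sub_le_card_filter_le_of_sum_le {β : Type*} (s : Finset β) {g : β → ℝ}
    (hg : ∀ ω ∈ s, 0 ≤ g ω) {a c : ℝ} (ha : 0 ≤ a) (hc : 0 ≤ c)
    (hsum : ∑ ω ∈ s, g ω ≤ c * a) :
    (#s : ℝ) - c ≤ #{ω ∈ s | g ω ≤ a} := by
  have hsplit := card_filter_add_card_filter_not (s := s) (fun ω => g ω ≤ a)
  simp only [not_le] at hsplit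
  suffices hbad : (#{ω ∈ s | a < g ω} : ℝ) ≤ c by
    rw [← hsplit]; push_cast; linarith
  rcases (s.filter fun ω => a < g ω).eq_empty_or_nonempty with hempty | hne
  · simpa [hempty] using hc
  -- strictness on the nonempty set `{a < g}` is what covers the case `a = 0`
  have hlt : (#{ω ∈ s | a < g ω} : ℝ) * a < c * a :=
    calc (#{ω ∈ s | a < g ω} : ℝ) * a = ∑ ω ∈ s with a < g ω, a := by
          rw [sum_const, nsmul_eq_mul]
      _ < ∑ ω ∈ s with a < g ω, g ω :=
          sum_lt_sum_of_nonempty hne fun ω hω => (mem_filter.mp hω).2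
      _ ≤ ∑ ω ∈ s, g ω :=
          sum_le_sum_of_subset_of_nonneg (filter_subset _ _) fun ω hω _ => hg ω hω
      _ ≤ c * a := hsum
  exact (lt_of_mul_lt_mul_right hlt ha).le

theorem sum_norm_sum_comp_sq {E α : Type*} [NormedAddCommGroup E] [InnerProductSpace ℝ E]
    [Fintype α] {f : α → E} (hf : ∑ a, f a = 0) (M : ℕ) :
    Fintype.card α * ∑ ω : Fin M → α, ‖∑ i, f (ω i)‖ ^ 2 =
      M * Fintype.card α ^ M * ∑ a, ‖f a‖ ^ 2 := by
  induction M with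
  | zero => simp
  | succ M ih =>
    have hstep : ∑ ω : Fin (M + 1) → α, ‖∑ i, f (ω i)‖ ^ 2 =
        Fintype.card α ^ M * ∑ a, ‖f a‖ ^ 2 +
          Fintype.card α * ∑ ω : Fin M → α, ‖∑ i, f (ω i)‖ ^ 2 := by
      rw [← (Fin.consEquiv fun _ => α).sum_comp, Fintype.sum_prod_type]
      simp only [Fin.consEquiv_apply, Fin.sum_univ_succ, Fin.cons_zero, Fin.cons_succ,
        norm_add_sq_real, sum_add_distrib, ← mul_sum, ← sum_inner, sum_comm (γ := α), hf,
        inner_zero_left, mul_zero, sum_const_zero, add_zero, sum_const, card_univ,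
        Fintype.card_fun, Fintype.card_fin, nsmul_eq_mul]
      push_cast; ring
    rw [hstep, mul_add, ih]
    push_cast; ring

theorem sum_sub_centroid {d : ℕ} (X : Finset (EuclideanSpace ℝ (Fin d))) :
    ∑ x ∈ X, (x - centroid X) = 0 := by
  rcases X.eq_empty_or_nonempty with rfl | hX
  · simp
  rw [sum_sub_distrib, sum_const, _root_.centroid, ← Nat.cast_smul_eq_nsmul ℝ, smul_smul,
    mul_inv_cancel₀ (by exact_mod_cast hX.card_pos.ne'), one_smul, sub_self]

theorem costPt_eq_costPt_centroid_add {d : ℕ} (X : Finset (EuclideanSpace ℝ (Fin d)))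
    (c : EuclideanSpace ℝ (Fin d)) :
    costPt X c = costPt X (centroid X) + X.card * ‖c - centroid X‖ ^ 2 := by
  have hsplit : ∀ x ∈ X, ‖x - c‖ ^ 2 = ‖x - centroid X‖ ^ 2 +
      2 * inner ℝ (x - centroid X) (centroid X - c) + ‖centroid X - c‖ ^ 2 := fun x _ => by
    rw [← norm_add_sq_real, sub_add_sub_cancel]
  rw [costPt, sum_congr rfl hsplit, sum_add_distrib, sum_add_distrib, ← mul_sum, ← sum_inner,
    sum_sub_centroid, inner_zero_left, mul_zero, add_zero, sum_const, nsmul_eq_mul,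
    norm_sub_rev, costPt]

theorem mul_sum_costPt_sampleMean_sub {d M : ℕ} (hM : M ≠ 0)
    (X : Finset (EuclideanSpace ℝ (Fin d))) :
    M * ∑ ω : Fin M → X,
        (costPt X ((M : ℝ)⁻¹ • ∑ i, (ω i : EuclideanSpace ℝ (Fin d))) - costPt X (centroid X)) =
      X.card ^ M * costPt X (centroid X) := by
  have hMR : (M : ℝ) ≠ 0 := Nat.cast_ne_zero.mpr hM
  have hdev : ∀ ω : Fin M → X, (M : ℝ)⁻¹ • ∑ i, (ω i : EuclideanSpace ℝ (Fin d)) - centroid X =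
      (M : ℝ)⁻¹ • ∑ i, ((ω i : EuclideanSpace ℝ (Fin d)) - centroid X) := fun ω => by
    rw [sum_sub_distrib, smul_sub, sum_const, card_univ, Fintype.card_fin,
      ← Nat.cast_smul_eq_nsmul ℝ, smul_smul, inv_mul_cancel₀ hMR, one_smul]
  have hvar := sum_norm_sum_comp_sq (f := fun x : X => (x : EuclideanSpace ℝ (Fin d)) - centroid X)
    (by rw [sum_coe_sort X fun x => x - centroid X, sum_sub_centroid]) M
  rw [Fintype.card_coe, sum_coe_sort X fun x => ‖x - centroid X‖ ^ 2] at hvar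
  have hexcess : ∀ ω : Fin M → X,
      costPt X ((M : ℝ)⁻¹ • ∑ i, (ω i : EuclideanSpace ℝ (Fin d))) - costPt X (centroid X) =
        X.card * (M : ℝ)⁻¹ ^ 2 * ‖∑ i, ((ω i : EuclideanSpace ℝ (Fin d)) - centroid X)‖ ^ 2 :=
    fun ω => by
      rw [costPt_eq_costPt_centroid_add, add_sub_cancel_left, hdev, norm_smul, mul_pow, norm_inv,
        RCLike.norm_natCast, mul_assoc]
  rw [sum_congr rfl fun ω _ => hexcess ω, ← mul_sum, costPt]
  field_simp
  linear_combination hvar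

/-- The `M` i.i.d. uniform samples are modelled by the `|X| ^ M` tuples `ω : Fin M → X`, so
probabilities become counts. -/
theorem inaba_katoh_imai_general {d M : ℕ} (hM : 1 ≤ M)
    (X : Finset (EuclideanSpace ℝ (Fin d))) (δ : ℝ) (hδ : 0 < δ) :
    (1 - δ) * ((X.card : ℝ) ^ M) ≤
      ((Finset.univ.filter (fun ω : Fin M → {x // x ∈ X} =>
          costPt X ((M : ℝ)⁻¹ • ∑ i, ((ω i : EuclideanSpace ℝ (Fin d))))
            ≤ (1 + 1 / (δ * M)) * costPt X (centroid X))).card : ℝ) := by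
  set Φ := costPt X (centroid X)
  set excess := fun ω : Fin M → X =>
    costPt X ((M : ℝ)⁻¹ • ∑ i, (ω i : EuclideanSpace ℝ (Fin d))) - Φ
  have hδM : 0 < δ * M := mul_pos hδ (by exact_mod_cast hM)
  have hΦ : 0 ≤ Φ := sum_nonneg fun _ _ => sq_nonneg _
  have hexcess : ∀ ω ∈ univ, 0 ≤ excess ω := fun ω _ => by
    simp only [excess, Φ]
    rw [costPt_eq_costPt_centroid_add X, add_sub_cancel_left]
    positivity
  have hsum : ∑ ω, excess ω = δ * X.card ^ M * (Φ / (δ * M)) := by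
    have := mul_sum_costPt_sampleMean_sub (by omega : M ≠ 0) X
    field_simp
    rw [mul_comm]
    exact this
  have hmarkov := card_sub_le_card_filter_le_of_sum_le univ hexcess (div_nonneg hΦ hδM.le)
    (by positivity) hsum.le
  rw [card_univ, Fintype.card_fun, Fintype.card_coe, Fintype.card_fin] at hmarkov
  convert hmarkov using 3
  · push_cast; ring
  · ext ω
    simp only [mem_filter, mem_univ, true_and, excess, add_mul, one_mul, one_div, inv_mul_eq_div,
      sub_le_iff_le_add']

/-- Lemma of Inaba, Katoh and Imai: if `x₁, …, x_M` are i.i.d. uniform samples from the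
finite nonempty set `X` (modeled by the uniform distribution over all `|X|^M` tuples
`ω : Fin M → X`), then with probability at least `1 − δ` the sample mean `μ(S)` satisfies
`Φ(X, μ(S)) ≤ (1 + 1/(δM)) · Φ(X, μ(X))`. -/
theorem inaba_katoh_imai {d M : ℕ} (hM : 1 ≤ M)
    (X : Finset (EuclideanSpace ℝ (Fin d))) (hX : X.Nonempty) (δ : ℝ) (hδ : 0 < δ) :
    (1 - δ) * ((X.card : ℝ) ^ M) ≤
      ((Finset.univ.filter (fun ω : Fin M → {x // x ∈ X} =>
          costPt X ((M : ℝ)⁻¹ • ∑ i, ((ω i : EuclideanSpace ℝ (Fin d))))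
            ≤ (1 + 1 / (δ * M)) * costPt X (centroid X))).card : ℝ) :=
  inaba_katoh_imai_general hM X δ hδ
end

section
/- (Lemma 3.4.) Let X be a finite set of points in ℝ^d, C a finite nonempty set of points in ℝ^d with Φ(X, C) > 0, and let X_j ⊆ X and Y_j ⊆ X_j. Let ε ∈ (0, 1] and let q ≥ 1 and k ≥ 0 be integers. Suppose Φ(Y_j, C) ≥ (ε/128)·Φ(X_j, C) and Φ(X_j, C) ≥ (ε/(12q))·Φ(X, C). If T ≥ 2¹²·q·ε⁻²·ln(10(k+q)) points are drawn independently from the D²-sampling distribution of X with respect to C, then the probability that none of them lies in Y_j is at most 1/(100(k+q)²). -/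
open MeasureTheory

/-- The cost of covering `X` with a (nonempty) finite center set `C`:
`Φ(X, C) = Σ_{x∈X} min_{c∈C} ‖x − c‖²`. -/
noncomputable def cost {d : ℕ} (X C : Finset (EuclideanSpace ℝ (Fin d))) : ℝ :=
  ∑ x ∈ X, ⨅ c : {c // c ∈ C}, ‖x - (c : EuclideanSpace ℝ (Fin d))‖ ^ 2

/-- The `D²`-sampling distribution of `X` with respect to `C`: it assigns to each `x ∈ X`
the probability `Φ({x}, C)/Φ(X, C)`. -/
noncomputable def dsqMeasure {d : ℕ} (X C : Finset (EuclideanSpace ℝ (Fin d))) :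
    Measure (EuclideanSpace ℝ (Fin d)) :=
  ∑ x ∈ X, (ENNReal.ofReal (cost {x} C / cost X C)) • Measure.dirac x

lemma cost_singleton_nonneg {d : ℕ} (x : EuclideanSpace ℝ (Fin d))
    (C : Finset (EuclideanSpace ℝ (Fin d))) : 0 ≤ cost {x} C := by
  unfold cost
  exact Finset.sum_nonneg fun y _ => Real.iInf_nonneg fun c => by positivity

lemma cost_eq_sum {d : ℕ} (X C : Finset (EuclideanSpace ℝ (Fin d))) :
    cost X C = ∑ x ∈ X, cost {x} C := by
  unfold cost
  exact Finset.sum_congr rfl fun x _ => (Finset.sum_singleton _ _).symm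

lemma dsq_apply {d : ℕ} (X C : Finset (EuclideanSpace ℝ (Fin d)))
    (S : Set (EuclideanSpace ℝ (Fin d))) :
    dsqMeasure X C S
      = ∑ x ∈ X, ENNReal.ofReal (cost {x} C / cost X C) * S.indicator 1 x := by
  unfold dsqMeasure
  rw [Measure.finset_sum_apply]
  exact Finset.sum_congr rfl fun x _ => by
    rw [Measure.smul_apply, Measure.dirac_apply, smul_eq_mul]


/-- Lemma 3.4: if `Φ(Y_j, C) ≥ (ε/128)·Φ(X_j, C)` and `Φ(X_j, C) ≥ (ε/(12q))·Φ(X, C)`, then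
among `T ≥ 2¹²·q·ε⁻²·ln(10(k+q))` independent `D²`-samples, none lies in `Y_j` with
probability at most `1/(100(k+q)²)`. -/
theorem d2_sample_hits_Yj {d : ℕ} (X Xj Yj C : Finset (EuclideanSpace ℝ (Fin d)))
    (hC : C.Nonempty) (hX : 0 < cost X C) (hXj : Xj ⊆ X) (hYj : Yj ⊆ Xj)
    (ε : ℝ) (hε : ε ∈ Set.Ioc (0 : ℝ) 1) (q k T : ℕ) (hq : 1 ≤ q)
    (h1 : cost Yj C ≥ (ε / 128) * cost Xj C)
    (h2 : cost Xj C ≥ (ε / (12 * (q : ℝ))) * cost X C)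
    (hT : (T : ℝ) ≥ 2 ^ 12 * (q : ℝ) * ε⁻¹ ^ 2 * Real.log (10 * ((k : ℝ) + (q : ℝ)))) :
    (Measure.pi fun _ : Fin T => dsqMeasure X C)
        {ω | ∀ i, ω i ∉ (Yj : Set (EuclideanSpace ℝ (Fin d)))}
      ≤ 1 / (100 * ((k : ENNReal) + (q : ENNReal)) ^ 2) := by
  classical
  obtain ⟨hε0, hε1⟩ := hε
  have hQ1 : (1 : ℝ) ≤ (q : ℝ) := by exact_mod_cast hq
  have hQ0 : (0 : ℝ) < (q : ℝ) := by linarith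
  set Q : ℝ := (q : ℝ)
  set K : ℝ := (k : ℝ)
  have hK0 : 0 ≤ K := Nat.cast_nonneg k
  set δ : ℝ := ε ^ 2 / (1536 * Q) with hδdef
  have hδ0 : 0 < δ := by positivity
  have hδ1 : δ ≤ 1 := by
    rw [hδdef, div_le_one (by positivity)]
    nlinarith
  -- cost of Yj is at least δ * cost X C
  have hYsub : Yj ⊆ X := hYj.trans hXj
  have hXjnn : 0 ≤ cost Xj C := by
    rw [cost_eq_sum]
    exact Finset.sum_nonneg fun x _ => cost_singleton_nonneg x C
  have hYcost : δ * cost X C ≤ cost Yj C := by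
    have step : (ε / 128) * ((ε / (12 * Q)) * cost X C) ≤ (ε / 128) * cost Xj C :=
      mul_le_mul_of_nonneg_left h2 (by positivity)
    have eq1 : (ε / 128) * ((ε / (12 * Q)) * cost X C) = δ * cost X C := by
      rw [hδdef]; field_simp; ring
    linarith
  -- measure of complement of Yj
  have hμc : dsqMeasure X C ((↑Yj : Set (EuclideanSpace ℝ (Fin d))))ᶜ
      ≤ ENNReal.ofReal (1 - δ) := by
    rw [dsq_apply]
    rw [← Finset.sum_sdiff hYsub]
    have t1 : ∀ x ∈ X \ Yj,
        ENNReal.ofReal (cost {x} C / cost X C) * ((↑Yj : Set _)ᶜ).indicator 1 x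
          = ENNReal.ofReal (cost {x} C / cost X C) := by
      intro x hx
      rw [Set.indicator_of_mem (by simpa using (Finset.mem_sdiff.mp hx).2), Pi.one_apply,
        mul_one]
    have t2 : ∀ x ∈ Yj,
        ENNReal.ofReal (cost {x} C / cost X C) * ((↑Yj : Set _)ᶜ).indicator 1 x = 0 := by
      intro x hx
      rw [Set.indicator_of_notMem (by simpa using hx), mul_zero]
    rw [Finset.sum_congr rfl t1, Finset.sum_congr rfl t2, Finset.sum_const_zero, add_zero]
    rw [← ENNReal.ofReal_sum_of_nonneg (fun x _ => by
      have := cost_singleton_nonneg x C; positivity)]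
    apply ENNReal.ofReal_le_ofReal
    rw [← Finset.sum_div, ← cost_eq_sum (X \ Yj) C]
    have : cost (X \ Yj) C = cost X C - cost Yj C := by
      rw [cost_eq_sum (X \ Yj) C, Finset.sum_sdiff_eq_sub hYsub, ← cost_eq_sum, ← cost_eq_sum]
    rw [this, div_le_iff₀ hX]
    nlinarith
  -- the measure is finite
  haveI : IsFiniteMeasure (dsqMeasure X C) := by
    constructor
    rw [dsq_apply]
    refine ENNReal.sum_lt_top.mpr fun x _ => ?_
    simpa [Set.indicator_univ] using ENNReal.ofReal_lt_top
  -- rewrite the event as a product set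
  have hev : {ω : Fin T → EuclideanSpace ℝ (Fin d) | ∀ i, ω i ∉ (↑Yj : Set _)}
      = Set.univ.pi (fun _ : Fin T => ((↑Yj : Set (EuclideanSpace ℝ (Fin d))))ᶜ) := by
    ext ω; simp [Set.mem_pi]
  rw [hev, Measure.pi_pi]
  rw [Finset.prod_const, Finset.card_univ, Fintype.card_fin]
  -- real-number core inequality
  have hKQ : (1 : ℝ) ≤ K + Q := by linarith
  set L : ℝ := Real.log (10 * (K + Q)) with hLdef
  have hL0 : 0 ≤ L := Real.log_nonneg (by linarith)
  have hδT : 2 * L ≤ δ * T := by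
    have key : δ * (2 ^ 12 * Q * ε⁻¹ ^ 2 * L) = (8 / 3) * L := by
      rw [hδdef]; field_simp; ring
    have h3 : δ * (2 ^ 12 * Q * ε⁻¹ ^ 2 * L) ≤ δ * T :=
      mul_le_mul_of_nonneg_left hT hδ0.le
    nlinarith
  have hreal : (1 - δ) ^ T ≤ 1 / (100 * (K + Q) ^ 2) := by
    have s1 : (1 - δ) ^ T ≤ Real.exp (-δ) ^ T :=
      pow_le_pow_left₀ (by linarith) (by linarith [Real.add_one_le_exp (-δ)]) T
    have s2 : Real.exp (-δ) ^ T = Real.exp ((T : ℝ) * (-δ)) := (Real.exp_nat_mul _ T).symm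
    have s3 : Real.exp ((T : ℝ) * (-δ)) ≤ Real.exp (-(2 * L)) := by
      apply Real.exp_le_exp.mpr; nlinarith
    have s4 : Real.exp (-(2 * L)) = 1 / (100 * (K + Q) ^ 2) := by
      have hexp : Real.exp L = 10 * (K + Q) := Real.exp_log (by linarith)
      have : Real.exp (-(2 * L)) = (Real.exp (-L)) ^ 2 := by
        rw [← Real.exp_nat_mul]; norm_num
      rw [this, Real.exp_neg, hexp]
      rw [inv_pow, one_div]
      congr 1
      ring
    calc (1 - δ) ^ T ≤ Real.exp (-δ) ^ T := s1
      _ = Real.exp ((T : ℝ) * (-δ)) := s2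
      _ ≤ Real.exp (-(2 * L)) := s3
      _ = 1 / (100 * (K + Q) ^ 2) := s4
  -- convert RHS to ofReal
  have hrhs : (1 : ENNReal) / (100 * ((k : ENNReal) + (q : ENNReal)) ^ 2)
      = ENNReal.ofReal (1 / (100 * (K + Q) ^ 2)) := by
    have hkq : ((k : ENNReal) + (q : ENNReal)) = ENNReal.ofReal (K + Q) := by
      rw [ENNReal.ofReal_add hK0 (by positivity)]
      simp [K, Q]
    rw [hkq, ← ENNReal.ofReal_pow (by linarith),
      ← ENNReal.ofReal_ofNat 100,
      ← ENNReal.ofReal_mul (by norm_num), one_div, one_div,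
      ← ENNReal.ofReal_inv_of_pos (by positivity)]
  rw [hrhs]
  calc dsqMeasure X C ((↑Yj : Set _))ᶜ ^ T
      ≤ ENNReal.ofReal (1 - δ) ^ T := pow_le_pow_left' hμc T
    _ = ENNReal.ofReal ((1 - δ) ^ T) := (ENNReal.ofReal_pow (by linarith) T).symm
    _ ≤ ENNReal.ofReal (1 / (100 * (K + Q) ^ 2)) := ENNReal.ofReal_le_ofReal hreal
end
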